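/- arXiv:1902.10578 — 2 statements merged into one kernel-verified Lean document; each statement's English description precedes it below -/
import Mathlib

section
/- Let (X,d,μ) be a metric space endowed with a doubling measure μ, and let S ⊂ X be a porous set. Let 1 ≤ p < ∞. Then there is a constant c, independent of x and r, such that for every x ∈ S and every 0 < r ≤ 1: ∫_{B(x,r)} ( log(1/d(y,S)) )^p dμ(y) ≤ c · μ(B(x,r)) · ( 1 + ( log(1/r) )^p ). (Note that for y ∈ B(x,r) with x ∈ S one has d(y,S) ≤ r ≤ 1, so the integrand is nonnegative.) -/
/-!
Porosity puts into every ball `B(z, t)` a hole: a ball of radius `κt/6` at distance at least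
`κt/6` from `S` which, by doubling, carries a fixed fraction `C^{-m}` of the mass of `B(z, 4t)`.
Covering the `t`-neighbourhood of `S` by disjoint Vitali balls and collecting their holes shows
that passing from the `2t`-neighbourhood of `S` to the `κt/6`-neighbourhood loses a fixed
proportion of the measure. Iterating inside `B(x, r)`, the set where `d(y, S) < r (κ/12)^k` has
measure at most `q^k C² μ(B(x, r))` with `q < 1`. Where `d(y, S) ≥ r (κ/12)^(k+1)` we have
`log (1/d(y, S)) ≤ log (1/r) + (k + 1) L` with `L = log (12/κ)`, so the integral is at most
`C² μ(B(x, r)) ∑ₖ (log (1/r) + (k + 1) L)^p q^k ≲ μ(B(x, r)) (1 + log^p (1/r))`.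
-/

open MeasureTheory Metric Set ENNReal

/-- `S` is porous in `X`: for some `κ ∈ (0,1]`, every ball `B(x,r)` with `0 < r ≤ 1`
contains a point `y` with `B(y,κr) ∩ S = ∅`. -/
def IsPorousSet {X : Type*} [MetricSpace X] (S : Set X) : Prop :=
  ∃ κ : ℝ, κ ∈ Set.Ioc (0 : ℝ) 1 ∧ ∀ (x : X) (r : ℝ), 0 < r → r ≤ 1 →
    ∃ y ∈ Metric.ball x r, Metric.ball y (κ * r) ∩ S = ∅

lemma exists_lt_mul_pow_and_log_one_div_le {d r θ : ℝ} (hd : 0 ≤ d) (hdr : d < r) (hr : r ≤ 1)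
    (hθ0 : 0 < θ) (hθ1 : θ < 1) :
    ∃ k : ℕ, d < r * θ ^ k ∧
      Real.log (1 / d) ≤ Real.log (1 / r) + (k + 1) * Real.log (1 / θ) := by
  have hr0 : 0 < r := hd.trans_lt hdr
  rcases hd.eq_or_lt with rfl | hd0
  · refine ⟨0, by simpa using hdr, ?_⟩
    have := Real.log_nonneg (one_le_one_div hr0 hr)
    have := Real.log_nonneg (one_le_one_div hθ0 hθ1.le)
    calc Real.log (1 / 0) = 0 := by simp
      _ ≤ _ := by push_cast; linarith
  obtain ⟨k, hk, hk1⟩ := Nat.exists_not_and_succ_of_not_zero_of_exists (p := (r * θ ^ · ≤ d))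
    (by simpa using hdr) ((exists_pow_lt_of_lt_one (div_pos hd0 hr0) hθ1).imp fun j hj =>
      ((lt_div_iff₀' hr0).1 hj).le)
  refine ⟨k, not_le.1 hk, ?_⟩
  calc Real.log (1 / d) ≤ Real.log (1 / (r * θ ^ (k + 1))) :=
        Real.log_le_log (by positivity) (one_div_le_one_div_of_le (by positivity) hk1)
    _ = Real.log (1 / r) + (k + 1) * Real.log (1 / θ) := by
        rw [← one_div_mul_one_div, ← one_div_pow, Real.log_mul (by positivity) (by positivity),
          Real.log_pow]
        push_cast
        ring

lemma one_add_rpow_le {R p : ℝ} (hR : 0 ≤ R) (hp : 0 ≤ p) :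
    (1 + R) ^ p ≤ 2 ^ p * (1 + R ^ p) :=
  calc (1 + R) ^ p ≤ (2 * max 1 R) ^ p := by
        gcongr; linarith [le_max_left 1 R, le_max_right 1 R]
    _ = 2 ^ p * max 1 (R ^ p) := by
        rw [Real.mul_rpow (by norm_num) (by positivity), Real.rpow_max zero_le_one hR hp,
          Real.one_rpow]
    _ ≤ 2 ^ p * (1 + R ^ p) := by gcongr; exact max_le_add_of_nonneg zero_le_one (by positivity)

lemma summable_add_one_rpow_mul_geometric {p q : ℝ} (hq0 : 0 < q) (hq1 : q < 1) :
    Summable fun k : ℕ => ((k : ℝ) + 1) ^ p * q ^ k := by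
  have hshift : Summable fun k : ℕ => ((k + 1 : ℕ) : ℝ) ^ ⌈p⌉₊ * q ^ (k + 1) :=
    (summable_nat_add_iff (f := fun k : ℕ => (k : ℝ) ^ ⌈p⌉₊ * q ^ k) 1).2 <|
      summable_pow_mul_geometric_of_norm_lt_one _ <| by rwa [Real.norm_of_nonneg hq0.le]
  refine .of_nonneg_of_le (fun k => by positivity) (fun k => ?_) (hshift.mul_left q⁻¹)
  calc ((k : ℝ) + 1) ^ p * q ^ k ≤ ((k : ℝ) + 1) ^ (⌈p⌉₊ : ℝ) * q ^ k := by
        gcongr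
        · linarith [k.cast_nonneg (α := ℝ)]
        · exact Nat.le_ceil p
    _ = q⁻¹ * (((k + 1 : ℕ) : ℝ) ^ ⌈p⌉₊ * q ^ (k + 1)) := by
        rw [Real.rpow_natCast, pow_succ]
        push_cast
        field_simp

lemma exists_tsum_ofReal_rpow_mul_geometric_le {L p : ℝ} {q : ℝ≥0∞} (hL : 0 ≤ L) (hp : 0 ≤ p)
    (hq0 : 0 < q) (hq1 : q < 1) :
    ∃ c > 0, ∀ R, 0 ≤ R →
      ∑' k : ℕ, ENNReal.ofReal ((R + (k + 1) * L) ^ p) * q ^ k ≤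
        ENNReal.ofReal (c * (1 + R ^ p)) := by
  lift q to NNReal using hq1.ne_top
  set g : ℕ → ℝ := fun k => (1 + (k + 1) * L) ^ p * q ^ k
  have hg0 : ∀ k, 0 ≤ g k := fun k => by positivity
  have hg : Summable g := by
    refine .of_nonneg_of_le hg0 (fun k => ?_) <|
      (summable_add_one_rpow_mul_geometric (p := p) (q := q) (by exact_mod_cast hq0)
        (by exact_mod_cast hq1)).mul_left ((1 + L) ^ p)
    calc g k ≤ ((1 + L) * ((k : ℝ) + 1)) ^ p * q ^ k := by
          simp only [g]; gcongr; nlinarith [k.cast_nonneg (α := ℝ)]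
      _ = (1 + L) ^ p * (((k : ℝ) + 1) ^ p * q ^ k) := by
          rw [Real.mul_rpow (by positivity) (by positivity), mul_assoc]
  refine ⟨2 ^ p * ∑' k, g k,
    mul_pos (by positivity) (hg.tsum_pos hg0 0 (by simp [g]; positivity)), fun R hR => ?_⟩
  calc ∑' k : ℕ, ENNReal.ofReal ((R + (k + 1) * L) ^ p) * (q : ℝ≥0∞) ^ k
      ≤ ∑' k : ℕ, ENNReal.ofReal ((1 + R) ^ p * g k) := by
        refine ENNReal.tsum_le_tsum fun k => ?_
        rw [← ENNReal.ofReal_coe_nnreal, ← ENNReal.ofReal_pow (by positivity),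
          ← ENNReal.ofReal_mul (by positivity), ← mul_assoc,
          ← Real.mul_rpow (by positivity) (by positivity)]
        gcongr
        nlinarith [mul_nonneg hR (mul_nonneg (by positivity : (0 : ℝ) ≤ k + 1) hL)]
    _ = ENNReal.ofReal ((1 + R) ^ p * ∑' k, g k) := by
        rw [← tsum_mul_left,
          ENNReal.ofReal_tsum_of_nonneg (fun k => by positivity) (hg.mul_left _)]
    _ ≤ ENNReal.ofReal ((2 ^ p * ∑' k, g k) * (1 + R ^ p)) :=
        ENNReal.ofReal_le_ofReal <| by
          nlinarith [one_add_rpow_le hR hp, (tsum_nonneg hg0 : 0 ≤ ∑' k, g k)]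

lemma le_div_add_one_pow_mul {a : ℕ → ℝ≥0∞} {D : ℝ≥0∞} (hD : D ≠ ⊤)
    (h : ∀ k, (D + 1) * a (k + 1) ≤ D * a k) (k : ℕ) : a k ≤ (D / (D + 1)) ^ k * a 0 := by
  induction k with
  | zero => simp
  | succ k ih =>
    calc a (k + 1) ≤ D / (D + 1) * a k := by
          rw [← ENNReal.mul_div_right_comm, ENNReal.le_div_iff_mul_le (by simp) (by simp [hD]),
            mul_comm]
          exact h k
      _ ≤ (D / (D + 1)) ^ (k + 1) * a 0 := by rw [pow_succ', mul_assoc]; gcongr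

lemma div_add_one_lt_one {D : ℝ≥0∞} (hD : D ≠ ⊤) : D / (D + 1) < 1 := by
  rw [ENNReal.div_lt_iff (by simp) (by simp [hD]), one_mul]
  exact ENNReal.lt_add_right hD one_ne_zero

lemma add_one_mul_measure_le_mul_measure {α : Type*} [MeasurableSpace α] {μ : Measure α}
    {A E B W : Set α} {D : ℝ≥0∞} (hAE : A ⊆ E) (hAB : A ⊆ B \ W) (hWB : W ⊆ B)
    (hW : MeasurableSet W) (hEW : μ E ≤ D * μ W) :
    (D + 1) * μ A ≤ D * μ B :=
  calc (D + 1) * μ A = D * μ A + μ A := by rw [add_mul, one_mul]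
    _ ≤ D * μ (B \ W) + D * μ W := by gcongr; exact (measure_mono hAE).trans hEW
    _ = D * μ B := by
        rw [← mul_add, add_comm, measure_add_sdiff hW.nullMeasurableSet, union_eq_right.2 hWB]

section

variable {X : Type*} [MetricSpace X]

lemma thickening_inter_ball_subset (S : Set X) (x : X) (δ ρ : ℝ) :
    thickening δ S ∩ ball x ρ ⊆ thickening δ (S ∩ ball x (ρ + δ)) := by
  rintro y ⟨hy, hyx⟩
  obtain ⟨z, hz, hyz⟩ := mem_thickening_iff.1 hy
  refine mem_thickening_iff.2 ⟨z, ⟨hz, ?_⟩, hyz⟩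
  rw [mem_ball] at hyx ⊢
  linarith [dist_triangle z y x, dist_comm z y]

def IsPorousWith (S : Set X) (κ : ℝ) : Prop :=
  ∀ (x : X) (r : ℝ), 0 < r → r ≤ 1 → ∃ y ∈ ball x r, ball y (κ * r) ∩ S = ∅

lemma IsPorousWith.exists_ball_disjoint_thickening {S : Set X} {κ : ℝ} (hS : IsPorousWith S κ)
    (z : X) {r : ℝ} (hr0 : 0 < r) (hr1 : r ≤ 1) :
    ∃ w ∈ ball z r, Disjoint (ball w (κ * r / 2)) (thickening (κ * r / 2) S) := by
  obtain ⟨w, hwz, hw⟩ := hS z r hr0 hr1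
  refine ⟨w, hwz, Set.disjoint_left.2 fun v hv hvS => ?_⟩
  obtain ⟨y, hyS, hvy⟩ := mem_thickening_iff.1 hvS
  have hy : y ∈ ball w (κ * r) := by
    rw [mem_ball] at hv ⊢
    linarith [dist_triangle y v w, dist_comm y v]
  exact eq_empty_iff_forall_notMem.1 hw y ⟨hy, hyS⟩

variable [MeasurableSpace X]

def IsDoublingWith (μ : Measure X) (C : ℝ) : Prop :=
  ∀ (x : X) (r : ℝ), 0 < r → μ (ball x (2 * r)) ≤ ENNReal.ofReal C * μ (ball x r)

namespace IsDoublingWith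

variable {μ : Measure X} {C : ℝ}

lemma mono (h : IsDoublingWith μ C) {C' : ℝ} (hC : C ≤ C') : IsDoublingWith μ C' :=
  fun x r hr => (h x r hr).trans (by gcongr)

lemma measure_ball_le_pow_mul (h : IsDoublingWith μ C) (z : X) {k : ℕ} {s R : ℝ} (hs : 0 < s)
    (hR : R ≤ 2 ^ k * s) : μ (ball z R) ≤ ENNReal.ofReal C ^ k * μ (ball z s) := by
  induction k generalizing s with
  | zero => simpa using measure_mono (ball_subset_ball (by simpa using hR))
  | succ k ih =>
    calc μ (ball z R) ≤ ENNReal.ofReal C ^ k * μ (ball z (2 * s)) :=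
          ih (by positivity) (by rw [pow_succ] at hR; linarith)
      _ ≤ ENNReal.ofReal C ^ (k + 1) * μ (ball z s) := by
          rw [pow_succ, mul_assoc]; gcongr; exact h z s hs

lemma exists_measure_ball_le_pow_mul (h : IsDoublingWith μ C) (x z : X) {r : ℝ} (hr : 0 < r)
    (R : ℝ) : ∃ k : ℕ, μ (ball z R) ≤ ENNReal.ofReal C ^ k * μ (ball x r) := by
  obtain ⟨k, hk⟩ := pow_unbounded_of_one_lt ((R + dist z x) / r) one_lt_two
  exact ⟨k, (measure_mono (ball_subset_ball' le_rfl)).trans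
    (h.measure_ball_le_pow_mul x hr ((div_le_iff₀ hr).1 hk.le))⟩

lemma measure_ball_ne_zero (h : IsDoublingWith μ C) {x : X} {r : ℝ} (hx : μ (ball x r) ≠ 0)
    (z : X) {s : ℝ} (hs : 0 < s) : μ (ball z s) ≠ 0 := by
  obtain ⟨k, hk⟩ := h.exists_measure_ball_le_pow_mul z x hs r
  exact fun hz => hx (le_zero_iff.1 (hk.trans_eq (by rw [hz, mul_zero])))

lemma measure_ball_ne_top (h : IsDoublingWith μ C) {x : X} {r : ℝ} (hr : 0 < r)
    (hx : μ (ball x r) ≠ ⊤) (z : X) (s : ℝ) : μ (ball z s) ≠ ⊤ := by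
  obtain ⟨k, hk⟩ := h.exists_measure_ball_le_pow_mul x z hr s
  exact ne_top_of_le_ne_top (mul_ne_top (pow_ne_top ofReal_ne_top) hx) hk

end IsDoublingWith

variable {μ : Measure X} {C κ : ℝ} {S : Set X} {m : ℕ}

lemma IsPorousWith.exists_hole (hS : IsPorousWith S κ) (hκ0 : 0 < κ) (hκ1 : κ ≤ 1)
    (hdbl : IsDoublingWith μ C) (hm : 30 / κ ≤ 2 ^ m) (z : X) {t : ℝ} (ht0 : 0 < t)
    (ht3 : t ≤ 3) :
    ∃ w, ball w (κ * t / 6) ⊆ closedBall z t ∧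
      Disjoint (ball w (κ * t / 6)) (thickening (κ * t / 6) S) ∧
      μ (closedBall z (4 * t)) ≤ ENNReal.ofReal C ^ m * μ (ball w (κ * t / 6)) := by
  obtain ⟨w, hwz, hw⟩ := hS.exists_ball_disjoint_thickening z (r := t / 3) (by positivity)
    (by linarith)
  rw [show κ * (t / 3) / 2 = κ * t / 6 by ring] at hw
  rw [mem_ball] at hwz
  refine ⟨w, fun v hv => ?_, hw, ?_⟩
  · rw [mem_ball] at hv
    rw [mem_closedBall]
    nlinarith [dist_triangle v w z]
  · have h5 : 5 * t ≤ 2 ^ m * (κ * t / 6) := by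
      rw [div_le_iff₀ hκ0] at hm
      nlinarith
    refine (measure_mono fun v hv => ?_).trans
      (hdbl.measure_ball_le_pow_mul w (by positivity) h5)
    rw [mem_closedBall] at hv
    rw [mem_ball]
    linarith [dist_triangle v z w, dist_comm z w]

variable [OpensMeasurableSpace X]

lemma exists_countable_pairwiseDisjoint_closedBall_cover_thickening {T : Set X} {t : ℝ}
    (hpos : ∀ z ∈ T, μ (ball z t) ≠ 0) (hfin : μ (⋃ z ∈ T, closedBall z t) ≠ ⊤) :
    ∃ u ⊆ T, u.Countable ∧ u.PairwiseDisjoint (closedBall · t) ∧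
      thickening t T ⊆ ⋃ z ∈ u, closedBall z (4 * t) := by
  obtain ⟨u, huT, hdisj, hcov⟩ := Vitali.exists_disjoint_subfamily_covering_enlargement_closedBall
    T id (fun _ => t) t (fun _ _ => le_rfl) 4 (by norm_num)
  refine ⟨u, huT, ?_, hdisj, fun y hy => ?_⟩
  · have hcount := Measure.countable_meas_pos_of_disjoint_of_meas_iUnion_ne_top μ
      (As := fun z : u => closedBall (z : X) t) (fun _ => measurableSet_closedBall)
      (fun i j hij => hdisj i.2 j.2 (Subtype.coe_injective.ne hij))
      (ne_top_of_le_ne_top hfin (measure_mono (iUnion_subset fun z : u =>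
        subset_biUnion_of_mem (u := fun z => closedBall z t) (huT z.2))))
    have huniv : {z : u | 0 < μ (closedBall (z : X) t)} = univ := eq_univ_of_forall fun z =>
      (pos_iff_ne_zero.2 (hpos z (huT z.2))).trans_le (measure_mono ball_subset_closedBall)
    rwa [huniv, countable_univ_iff, countable_coe_iff] at hcount
  · obtain ⟨a, ha, hya⟩ := mem_thickening_iff.1 hy
    obtain ⟨b, hb, hab⟩ := hcov a ha
    exact mem_biUnion hb (hab (mem_closedBall.2 hya.le))

lemma IsPorousWith.exists_holes (hS : IsPorousWith S κ) (hκ0 : 0 < κ) (hκ1 : κ ≤ 1)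
    (hdbl : IsDoublingWith μ C) (hm : 30 / κ ≤ 2 ^ m) (hpos : ∀ z s, 0 < s → μ (ball z s) ≠ 0)
    {x : X} {t ρ' ρ : ℝ} (ht0 : 0 < t) (ht3 : t ≤ 3) (hρ : ρ' + 2 * t ≤ ρ)
    (hfin : μ (ball x ρ) ≠ ⊤) :
    ∃ W ⊆ thickening (2 * t) S ∩ ball x ρ, MeasurableSet W ∧
      Disjoint W (thickening (κ * t / 6) S) ∧
      μ (thickening t S ∩ ball x ρ') ≤ ENNReal.ofReal C ^ m * μ W := by
  set T := S ∩ ball x (ρ' + t)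
  have hTball : ∀ z ∈ T, closedBall z t ⊆ ball x ρ := fun z hz v hv => by
    rw [mem_closedBall] at hv
    rw [mem_ball]
    linarith [dist_triangle v z x, mem_ball.1 hz.2]
  obtain ⟨u, huT, hucount, hudisj, hcov⟩ :=
    exists_countable_pairwiseDisjoint_closedBall_cover_thickening (T := T)
      (fun z _ => hpos z t ht0) (ne_top_of_le_ne_top hfin (measure_mono (iUnion₂_subset hTball)))
  choose w hwsub hwdisj hwμ using fun z => hS.exists_hole (μ := μ) hκ0 hκ1 hdbl hm z ht0 ht3
  refine ⟨⋃ z ∈ u, ball (w z) (κ * t / 6), iUnion₂_subset fun z hz v hv => ?_,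
    (isOpen_biUnion fun _ _ => isOpen_ball).measurableSet,
    disjoint_iUnion₂_left.2 fun z _ => hwdisj z, ?_⟩
  · refine ⟨mem_thickening_iff.2 ⟨z, (huT hz).1, ?_⟩, hTball z (huT hz) (hwsub z hv)⟩
    linarith [mem_closedBall.1 (hwsub z hv)]
  calc μ (thickening t S ∩ ball x ρ') ≤ μ (⋃ z ∈ u, closedBall z (4 * t)) :=
        measure_mono ((thickening_inter_ball_subset S x t ρ').trans hcov)
    _ ≤ ∑' z : u, μ (closedBall (z : X) (4 * t)) := measure_biUnion_le μ hucount _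
    _ ≤ ∑' z : u, ENNReal.ofReal C ^ m * μ (ball (w z) (κ * t / 6)) :=
        ENNReal.tsum_le_tsum fun z => hwμ z
    _ = ENNReal.ofReal C ^ m * μ (⋃ z ∈ u, ball (w z) (κ * t / 6)) := by
        rw [ENNReal.tsum_mul_left,
          measure_biUnion hucount (hudisj.mono fun z => hwsub z) fun _ _ => measurableSet_ball]

lemma IsPorousWith.add_one_mul_measure_thickening_inter_ball_le (hS : IsPorousWith S κ)
    (hκ0 : 0 < κ) (hκ1 : κ ≤ 1) (hdbl : IsDoublingWith μ C) (hm : 30 / κ ≤ 2 ^ m)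
    (hpos : ∀ z s, 0 < s → μ (ball z s) ≠ 0) {x : X} {t ρ' ρ : ℝ} (ht0 : 0 < t) (ht3 : t ≤ 3)
    (hρ : ρ' + 2 * t ≤ ρ) (hfin : μ (ball x ρ) ≠ ⊤) :
    (ENNReal.ofReal C ^ m + 1) * μ (thickening (κ * t / 6) S ∩ ball x ρ') ≤
      ENNReal.ofReal C ^ m * μ (thickening (2 * t) S ∩ ball x ρ) := by
  obtain ⟨W, hWsub, hW, hWdisj, hWμ⟩ := hS.exists_holes hκ0 hκ1 hdbl hm hpos ht0 ht3 hρ hfin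
  have hκt : κ * t / 6 ≤ t := by nlinarith
  refine add_one_mul_measure_le_mul_measure (inter_subset_inter_left _ (thickening_mono hκt S))
    (fun y hy => ⟨⟨thickening_mono (by linarith) S hy.1, ball_subset_ball (by linarith) hy.2⟩,
      fun hyW => Set.disjoint_left.1 hWdisj hyW hy.1⟩) hWsub hW hWμ

theorem IsPorousWith.measure_thickening_inter_ball_le (hS : IsPorousWith S κ) (hκ0 : 0 < κ)
    (hκ1 : κ ≤ 1) (hdbl : IsDoublingWith μ C) (hm : 30 / κ ≤ 2 ^ m)
    (hpos : ∀ z s, 0 < s → μ (ball z s) ≠ 0) (hfin : ∀ z s, μ (ball z s) ≠ ⊤) (x : X) {r : ℝ}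
    (hr0 : 0 < r) (hr1 : r ≤ 1) (k : ℕ) :
    μ (thickening (r * (κ / 12) ^ k) S ∩ ball x r) ≤
      (ENNReal.ofReal C ^ m / (ENNReal.ofReal C ^ m + 1)) ^ k *
        (ENNReal.ofReal C ^ 2 * μ (ball x r)) := by
  set θ := κ / 12
  have hθ0 : 0 < θ := by positivity
  have hθ : θ ≤ 1 / 2 := by simp only [θ]; linarith
  -- Since `θ ≤ 1/2`, consecutive radii differ by at least `r θ^k`, the margin `2t` of the step.
  set a : ℕ → ℝ≥0∞ := fun k => μ (thickening (r * θ ^ k) S ∩ ball x (r * (1 + 2 * θ ^ k)))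
  have hstep : ∀ k, (ENNReal.ofReal C ^ m + 1) * a (k + 1) ≤ ENNReal.ofReal C ^ m * a k := by
    intro k
    have hθk : 0 < θ ^ k := pow_pos hθ0 k
    have hrθk : r * θ ^ k ≤ 1 := mul_le_one₀ hr1 hθk.le (pow_le_one₀ hθ0.le (by linarith))
    have := hS.add_one_mul_measure_thickening_inter_ball_le hκ0 hκ1 hdbl hm hpos
      (t := r * θ ^ k / 2) (ρ' := r * (1 + 2 * θ ^ (k + 1))) (ρ := r * (1 + 2 * θ ^ k))
      (by positivity) (by linarith) (by rw [pow_succ]; nlinarith [mul_pos hr0 hθk]) (hfin x _)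
    rwa [show κ * (r * θ ^ k / 2) / 6 = r * θ ^ (k + 1) by rw [pow_succ]; ring,
      show 2 * (r * θ ^ k / 2) = r * θ ^ k by ring] at this
  calc μ (thickening (r * θ ^ k) S ∩ ball x r) ≤ a k :=
        measure_mono (inter_subset_inter_right _
          (ball_subset_ball (by nlinarith [mul_pos hr0 (pow_pos hθ0 k)])))
    _ ≤ (ENNReal.ofReal C ^ m / (ENNReal.ofReal C ^ m + 1)) ^ k * a 0 :=
        le_div_add_one_pow_mul (pow_ne_top ofReal_ne_top) hstep k
    _ ≤ _ := by
        gcongr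
        exact (measure_mono inter_subset_right).trans
          (hdbl.measure_ball_le_pow_mul x hr0 (by norm_num; linarith))

theorem lintegral_log_rpow_infDist_le_tsum (μ : Measure X) (hS : S.Nonempty) {s : Set X}
    (hs : MeasurableSet s) {r θ p : ℝ} (hsS : s ⊆ thickening r S) (hr : r ≤ 1) (hθ0 : 0 < θ)
    (hθ1 : θ < 1) (hp : 0 ≤ p) :
    ∫⁻ y in s, ENNReal.ofReal (Real.log (1 / infDist y S) ^ p) ∂μ ≤
      ∑' k : ℕ, ENNReal.ofReal ((Real.log (1 / r) + (k + 1) * Real.log (1 / θ)) ^ p) *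
        μ (thickening (r * θ ^ k) S ∩ s) := by
  set g : ℕ → ℝ≥0∞ := fun k =>
    ENNReal.ofReal ((Real.log (1 / r) + (k + 1) * Real.log (1 / θ)) ^ p)
  have hmeas : ∀ k : ℕ, MeasurableSet (thickening (r * θ ^ k) S) := fun _ =>
    isOpen_thickening.measurableSet
  calc ∫⁻ y in s, ENNReal.ofReal (Real.log (1 / infDist y S) ^ p) ∂μ
      ≤ ∫⁻ y in s, ∑' k, (thickening (r * θ ^ k) S).indicator (fun _ => g k) y ∂μ := by
        refine setLIntegral_mono' hs fun y hy => ?_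
        have hyr := (mem_thickening_iff_infDist_lt hS).1 (hsS hy)
        obtain ⟨k, hk, hlog⟩ :=
          exists_lt_mul_pow_and_log_one_div_le infDist_nonneg hyr hr hθ0 hθ1
        refine le_trans ?_ (ENNReal.le_tsum k)
        rw [indicator_of_mem ((mem_thickening_iff_infDist_lt hS).2 hk)]
        have hlog0 : 0 ≤ Real.log (1 / infDist y S) := by
          rw [one_div, Real.log_inv]
          exact neg_nonneg.2 (Real.log_nonpos infDist_nonneg (by linarith))
        exact ENNReal.ofReal_le_ofReal (Real.rpow_le_rpow hlog0 hlog hp)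
    _ = ∑' k, g k * μ (thickening (r * θ ^ k) S ∩ s) := by
        rw [lintegral_tsum fun k => (measurable_const.indicator (hmeas k)).aemeasurable]
        refine tsum_congr fun k => ?_
        rw [lintegral_indicator_const (hmeas k), Measure.restrict_apply (hmeas k)]

theorem IsPorousWith.lintegral_log_rpow_infDist_ball_le (hS : IsPorousWith S κ) (hκ0 : 0 < κ)
    (hκ1 : κ ≤ 1) (hdbl : IsDoublingWith μ C) (hm : 30 / κ ≤ 2 ^ m)
    (hpos : ∀ z s, 0 < s → μ (ball z s) ≠ 0) (hfin : ∀ z s, μ (ball z s) ≠ ⊤) {p : ℝ}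
    (hp : 0 ≤ p) {x : X} (hx : x ∈ S) {r : ℝ} (hr0 : 0 < r) (hr1 : r ≤ 1) :
    ∫⁻ y in ball x r, ENNReal.ofReal (Real.log (1 / infDist y S) ^ p) ∂μ ≤
      (∑' k : ℕ, ENNReal.ofReal ((Real.log (1 / r) + (k + 1) * Real.log (1 / (κ / 12))) ^ p) *
        (ENNReal.ofReal C ^ m / (ENNReal.ofReal C ^ m + 1)) ^ k) *
          (ENNReal.ofReal C ^ 2 * μ (ball x r)) := by
  rw [← ENNReal.tsum_mul_right]
  refine (lintegral_log_rpow_infDist_le_tsum μ ⟨x, hx⟩ measurableSet_ball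
    (ball_subset_thickening hx r) hr1 (θ := κ / 12) (by positivity) (by linarith) hp).trans
    (ENNReal.tsum_le_tsum fun k => ?_)
  rw [mul_assoc]
  gcongr
  exact hS.measure_thickening_inter_ball_le hκ0 hκ1 hdbl hm hpos hfin x hr0 hr1 k

end

theorem log_integral_porous_set_general
    {X : Type*} [MetricSpace X] [MeasurableSpace X] [BorelSpace X]
    (μ : MeasureTheory.Measure X)
    (C_d : ℝ)
    (hdbl : ∀ (x : X) (r : ℝ), 0 < r →
      μ (Metric.ball x (2 * r)) ≤ ENNReal.ofReal C_d * μ (Metric.ball x r))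
    (S : Set X) (hS : IsPorousSet S)
    (p : ℝ) (hp : 1 ≤ p) :
    ∃ c > (0 : ℝ), ∀ x ∈ S, ∀ r : ℝ, 0 < r → r ≤ 1 →
      (∫⁻ y in Metric.ball x r,
          ENNReal.ofReal (Real.log (1 / Metric.infDist y S) ^ p) ∂μ)
        ≤ ENNReal.ofReal c * μ (Metric.ball x r) *
            ENNReal.ofReal (1 + Real.log (1 / r) ^ p) := by
  obtain ⟨κ, ⟨hκ0, hκ1⟩, hpor : IsPorousWith S κ⟩ := hS
  set C := max C_d 1
  have hC0 : 0 < C := lt_max_of_lt_right one_pos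
  have hC : IsDoublingWith μ C := IsDoublingWith.mono hdbl (le_max_left _ _)
  obtain ⟨m, hm⟩ := pow_unbounded_of_one_lt (30 / κ) one_lt_two
  have hD : ENNReal.ofReal C ^ m ≠ ⊤ := pow_ne_top ofReal_ne_top
  obtain ⟨c, hc, hsum⟩ := exists_tsum_ofReal_rpow_mul_geometric_le (L := Real.log (1 / (κ / 12)))
    (Real.log_nonneg (one_le_one_div (by positivity) (by linarith))) (by linarith : 0 ≤ p)
    (ENNReal.div_pos (pow_ne_zero _ (ENNReal.ofReal_pos.2 hC0).ne') (by simp))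
    (div_add_one_lt_one hD)
  refine ⟨C ^ 2 * c, by positivity, fun x hx r hr0 hr1 => ?_⟩
  have hR : 0 ≤ Real.log (1 / r) := Real.log_nonneg (one_le_one_div hr0 hr1)
  rcases eq_or_ne (μ (ball x r)) 0 with h0 | h0
  · simp [setLIntegral_measure_zero _ _ h0]
  rcases eq_or_ne (μ (ball x r)) ⊤ with htop | htop
  · rw [htop, ENNReal.mul_top (by simp; positivity),
      ENNReal.top_mul (ENNReal.ofReal_pos.2 (by positivity [Real.rpow_nonneg hR p])).ne']
    exact le_top
  calc _ ≤ _ := hpor.lintegral_log_rpow_infDist_ball_le hκ0 hκ1 hC hm.le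
        (fun z s hs => hC.measure_ball_ne_zero h0 z hs) (hC.measure_ball_ne_top hr0 htop)
        (by linarith) hx hr0 hr1
    _ ≤ ENNReal.ofReal (c * (1 + Real.log (1 / r) ^ p)) *
        (ENNReal.ofReal C ^ 2 * μ (ball x r)) := by gcongr; exact hsum _ hR
    _ = _ := by
        rw [ENNReal.ofReal_mul hc.le, ENNReal.ofReal_mul (by positivity),
          ENNReal.ofReal_pow hC0.le]
        ring

/-- Logarithmic integral estimate around porous sets in doubling metric measure spaces:
for `x ∈ S` and `0 < r ≤ 1`,
`∫_{B(x,r)} log^p (1/d(y,S)) dμ(y) ≤ c μ(B(x,r)) (1 + log^p (1/r))`. -/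
theorem log_integral_porous_set
    {X : Type*} [MetricSpace X] [MeasurableSpace X] [BorelSpace X]
    (μ : MeasureTheory.Measure X)
    (C_d : ℝ) (hCd : 0 < C_d)
    (hdbl : ∀ (x : X) (r : ℝ), 0 < r →
      μ (Metric.ball x (2 * r)) ≤ ENNReal.ofReal C_d * μ (Metric.ball x r))
    (S : Set X) (hS : IsPorousSet S)
    (p : ℝ) (hp : 1 ≤ p) :
    ∃ c > (0 : ℝ), ∀ x ∈ S, ∀ r : ℝ, 0 < r → r ≤ 1 →
      (∫⁻ y in Metric.ball x r,
          ENNReal.ofReal (Real.log (1 / Metric.infDist y S) ^ p) ∂μ)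
        ≤ ENNReal.ofReal c * μ (Metric.ball x r) *
            ENNReal.ofReal (1 + Real.log (1 / r) ^ p) :=
  log_integral_porous_set_general μ C_d hdbl S hS p hp
end

section
/- Let (X,d) be a complete metric space and let Ω ⊂ X be a bounded John domain. Then the boundary ∂Ω is a porous set in X: there exists κ ∈ (0,1] such that for every x ∈ X and every 0 < r ≤ 1 there is y ∈ B(x,r) with B(y,κr) ∩ ∂Ω = ∅. -/
open Metric Set

/-- `Ω` is a John domain: a bounded open connected set with a central point `x₀` and
constant `c_J > 0` such that every `x ∈ Ω` is joined to `x₀` by a rectifiable curve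
parametrized by arc length (hence `1`-Lipschitz) staying in `Ω`, along which
`dist(γ t, ∂Ω) ≥ t / c_J`. -/
def IsJohnDomain {X : Type*} [MetricSpace X] (Ω : Set X) : Prop :=
  IsOpen Ω ∧ IsConnected Ω ∧ Bornology.IsBounded Ω ∧
  ∃ x₀ ∈ Ω, ∃ cJ > (0 : ℝ), ∀ x ∈ Ω, ∃ l ≥ (0 : ℝ), ∃ γ : ℝ → X,
    γ 0 = x ∧ γ l = x₀ ∧ (∀ t ∈ Set.Icc 0 l, γ t ∈ Ω) ∧
    LipschitzOnWith 1 γ (Set.Icc 0 l) ∧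
    ∀ t ∈ Set.Icc 0 l, t / cJ ≤ Metric.infDist (γ t) (frontier Ω)

/-!
Near every point of `Ω`, at every scale `s ≤ 1`, there is a ball of radius comparable to `s`
missing `∂Ω`: follow the John curve for time `s`, where the distance to `∂Ω` is at least `s / c_J`,
or, if the curve is shorter than `s`, take a fixed ball around the central point. Since `∂Ω` lies
in the closure of `Ω`, every ball `B(x, r)` either misses `∂Ω` near its centre or contains such a
ball at scale `r / 4`.
-/

section Porosity

variable {X : Type*} [MetricSpace X]

theorem IsPorousSet.of_subset_closure {S A : Set X} (hSA : S ⊆ closure A) {c : ℝ} (hc : 0 < c)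
    (h : ∀ w ∈ A, ∀ s, 0 < s → s ≤ 1 → ∃ y, dist y w ≤ s ∧ Disjoint (ball y (c * s)) S) :
    IsPorousSet S := by
  set κ := min (1 / 2) (c / 4)
  refine ⟨κ, ⟨lt_min one_half_pos (by positivity), (min_le_left _ _).trans one_half_lt_one.le⟩, ?_⟩
  intro x r hr hr1
  have hκr : κ * r ≤ r / 2 := by nlinarith [min_le_left (1 / 2 : ℝ) (c / 4)]
  by_cases hx : Disjoint (ball x (r / 2)) S
  · exact ⟨x, mem_ball_self hr,
      disjoint_iff_inter_eq_empty.mp (hx.mono_left (ball_subset_ball hκr))⟩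
  obtain ⟨z, hxz, hzS⟩ := not_disjoint_iff.mp hx
  obtain ⟨w, hwA, hzw⟩ := Metric.mem_closure_iff.mp (hSA hzS) (r / 4) (by positivity)
  obtain ⟨y, hyw, hy⟩ := h w hwA (r / 4) (by positivity) (by linarith)
  refine ⟨y, ?_, disjoint_iff_inter_eq_empty.mp (hy.mono_left (ball_subset_ball ?_))⟩
  · rw [mem_ball] at hxz ⊢
    calc dist y x ≤ dist y w + dist w z + dist z x := dist_triangle4 _ _ _ _
      _ < r := by rw [dist_comm w z]; linarith
  · nlinarith [min_le_right (1 / 2 : ℝ) (c / 4)]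

theorem IsJohnDomain.exists_disjoint_ball_frontier {Ω : Set X} (hΩ : IsJohnDomain Ω) :
    ∃ c > 0, ∀ w ∈ Ω, ∀ s, 0 < s → s ≤ 1 →
      ∃ y, dist y w ≤ s ∧ Disjoint (ball y (c * s)) (frontier Ω) := by
  obtain ⟨hopen, -, -, x₀, hx₀, cJ, hcJ, hJohn⟩ := hΩ
  obtain ⟨δ, hδ, hδΩ⟩ := Metric.isOpen_iff.mp hopen x₀ hx₀
  refine ⟨min cJ⁻¹ δ, lt_min (inv_pos.mpr hcJ) hδ, fun w hw s hs hs1 => ?_⟩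
  obtain ⟨l, hl, γ, hγ0, hγl, -, hγlip, hγdist⟩ := hJohn w hw
  have hdist : ∀ t ∈ Icc 0 l, dist (γ t) w ≤ t := fun t ht => by
    simpa [hγ0, Real.dist_eq, abs_of_nonneg ht.1] using
      hγlip.dist_le_mul t ht 0 ⟨le_rfl, hl⟩
  rcases le_or_gt s l with hsl | hls
  · refine ⟨γ s, hdist s ⟨hs.le, hsl⟩, disjoint_ball_infDist.mono_left (ball_subset_ball ?_)⟩
    calc min cJ⁻¹ δ * s ≤ cJ⁻¹ * s := by gcongr; exact min_le_left _ _
      _ = s / cJ := inv_mul_eq_div cJ s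
      _ ≤ infDist (γ s) (frontier Ω) := hγdist s ⟨hs.le, hsl⟩
  · refine ⟨x₀, hγl ▸ (hdist l ⟨hl, le_rfl⟩).trans hls.le, ?_⟩
    have hcs : min cJ⁻¹ δ * s ≤ δ := by nlinarith [min_le_right cJ⁻¹ δ]
    exact (disjoint_frontier_iff_isOpen.mpr hopen).symm.mono_left
      ((ball_subset_ball hcs).trans hδΩ)

end Porosity

theorem john_domain_boundary_porous_general
    {X : Type*} [MetricSpace X]
    (Ω : Set X) (hΩ : IsJohnDomain Ω) :
    IsPorousSet (frontier Ω) := by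
  obtain ⟨c, hc, hball⟩ := hΩ.exists_disjoint_ball_frontier
  exact IsPorousSet.of_subset_closure frontier_subset_closure hc hball

/-- The boundary of a bounded John domain in a complete metric space is porous. -/
theorem john_domain_boundary_porous
    {X : Type*} [MetricSpace X] [CompleteSpace X]
    (Ω : Set X) (hΩ : IsJohnDomain Ω) :
    IsPorousSet (frontier Ω) :=
  john_domain_boundary_porous_general Ω hΩ
end
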